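/- arXiv:2203.10891 — 4 statements merged into one kernel-verified Lean document; each statement's English description precedes it below -/
import Mathlib

section
/- Let (T,d,ρ,u) be a plane ℝ-tree. Then the sets {(α,β) ∈ (T×[0,1])² : α → β} and {(α,β) ∈ (T×[0,1])² : α ↷ β} are Borel subsets of (T×[0,1])² for the product topology. -/
open Set MeasureTheory Filter Metric

/-- The metric segment `[[x,y]]` between `x` and `y`. -/
def geoSeg {T : Type*} [MetricSpace T] (x y : T) : Set T :=
  {z | dist x z + dist z y = dist x y}

/-- `(T,d)` is an `ℝ`-tree: it is geodesic (any two points are joined by a geodesic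
segment, which is `geoSeg x y`) and loopless (this segment is the unique arc joining
`x` and `y`). -/
structure IsRTree (T : Type*) [MetricSpace T] : Prop where
  geodesic : ∀ x y : T, ∃ γ : ℝ → T, γ 0 = x ∧ γ (dist x y) = y ∧
    (∀ s ∈ Icc (0:ℝ) (dist x y), ∀ t ∈ Icc (0:ℝ) (dist x y),
      dist (γ s) (γ t) = |s - t|) ∧
    γ '' Icc (0:ℝ) (dist x y) = geoSeg x y
  loopless : ∀ x y : T, ∀ f : ℝ → T, ContinuousOn f (Icc (0:ℝ) 1) →
    InjOn f (Icc (0:ℝ) 1) → f 0 = x → f 1 = y → f '' Icc (0:ℝ) 1 = geoSeg x y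

/-- The set of connected components of `T \ {x}`. -/
def comps {T : Type*} [MetricSpace T] (x : T) : Set (Set T) :=
  {C | ∃ y, y ≠ x ∧ C = connectedComponentIn ({x}ᶜ) y}

/-- A plane `ℝ`-tree structure on the metric space `T`: `T` is a separable complete
`ℝ`-tree with a root and a balanced angle function `u`.  `cca x y` is the closest
common ancestor of `x` and `y`. -/
structure PlaneRTree (T : Type*) [MetricSpace T] where
  sep : TopologicalSpace.SeparableSpace T
  cpl : CompleteSpace T
  tree : IsRTree T
  root : T
  cca : T → T → T
  cca_mem : ∀ x y : T, cca x y ∈ geoSeg root x ∩ geoSeg root y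
  cca_max : ∀ x y : T, ∀ z ∈ geoSeg root x ∩ geoSeg root y,
    dist root z ≤ dist root (cca x y)
  u : T → T → ℝ
  u_mem : ∀ x y : T, u x y ∈ Icc (0:ℝ) 1
  u_root : ∀ x : T, u x root = 0
  u_self : ∀ x : T, u x x = 0
  u_eq_iff : ∀ x y z : T, y ≠ x → z ≠ x →
    (u x y = u x z ↔ connectedComponentIn ({x}ᶜ) y = connectedComponentIn ({x}ᶜ) z)
  balanced : ∀ x y : T, (comps x).ncard = 2 → u x y = 0 ∨ u x y = 1/2

namespace PlaneRTree

variable {T : Type*} [MetricSpace T]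

open Classical in
/-- The angle `u(x, (y,w))`: it is `u x y` if `x ≠ y`, and `w` if `x = y`. -/
noncomputable def ang (P : PlaneRTree T) (x : T) (β : T × ℝ) : ℝ :=
  if x = β.1 then β.2 else P.u x β.1

/-- `α ↷ β` : `α` is at the left of `β`. -/
def leftOf (P : PlaneRTree T) (α β : T × ℝ) : Prop :=
  P.ang (P.cca α.1 β.1) α < P.ang (P.cca α.1 β.1) β

/-- `α → β` : `β` is in front of `α`. -/
def frontOf (P : PlaneRTree T) (α β : T × ℝ) : Prop :=
  α.1 ∈ geoSeg P.root β.1 ∧ P.ang α.1 β = α.2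

/-- The contour relation `≺` : `α ≺ β` iff `α ↷ β` or `α → β`. -/
def precOf (P : PlaneRTree T) (α β : T × ℝ) : Prop :=
  P.leftOf α β ∨ P.frontOf α β

end PlaneRTree

namespace RTreeAux

variable {T : Type*} [MetricSpace T]

lemma left_mem_geoSeg (x y : T) : x ∈ geoSeg x y := by simp [geoSeg]
lemma right_mem_geoSeg (x y : T) : y ∈ geoSeg x y := by simp [geoSeg]

lemma geoSeg_self (x : T) : geoSeg x x = {x} := by
  ext z; simp only [geoSeg, mem_setOf_eq, dist_self, mem_singleton_iff]
  constructor
  · intro h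
    have h1 : dist x z = 0 := by
      have := dist_nonneg (x := x) (y := z); have := dist_nonneg (x := z) (y := x); linarith
    exact (dist_eq_zero.mp h1).symm
  · rintro rfl; simp

lemma isClosed_geoSeg (x y : T) : IsClosed (geoSeg x y) :=
  isClosed_eq ((continuous_const.dist continuous_id).add (continuous_id.dist continuous_const))
    continuous_const

lemma geoSeg_trans {ρ x c z : T} (hc : c ∈ geoSeg ρ x) (hz : z ∈ geoSeg c x) :
    z ∈ geoSeg ρ x ∧ dist ρ z = dist ρ c + dist c z := by
  simp only [geoSeg, mem_setOf_eq] at *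
  have h1 : dist ρ z ≤ dist ρ c + dist c z := dist_triangle _ _ _
  have h2 : dist ρ x ≤ dist ρ z + dist z x := dist_triangle _ _ _
  constructor <;> linarith

lemma iso_continuousOn {γ : ℝ → T} {L : ℝ}
    (hiso : ∀ s ∈ Icc (0:ℝ) L, ∀ t ∈ Icc (0:ℝ) L, dist (γ s) (γ t) = |s - t|) :
    ContinuousOn γ (Icc (0:ℝ) L) := by
  have : LipschitzOnWith 1 γ (Icc (0:ℝ) L) := by
    rw [lipschitzOnWith_iff_dist_le_mul]
    intro s hs t ht
    rw [hiso s hs t ht]; simp [Real.dist_eq]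
  exact this.continuousOn

lemma iso_injOn {γ : ℝ → T} {L : ℝ}
    (hiso : ∀ s ∈ Icc (0:ℝ) L, ∀ t ∈ Icc (0:ℝ) L, dist (γ s) (γ t) = |s - t|) :
    InjOn γ (Icc (0:ℝ) L) := by
  intro s hs t ht h
  have h2 := hiso s hs t ht
  rw [h, dist_self] at h2
  have := abs_eq_zero.mp h2.symm
  linarith

variable (ht : IsRTree T)
include ht

lemma isPreconnected_geoSeg (x y : T) : IsPreconnected (geoSeg x y) := by
  obtain ⟨γ, h0, hL, hiso, him⟩ := ht.geodesic x y
  rw [← him]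
  exact isPreconnected_Icc.image γ (iso_continuousOn hiso)

lemma geoSeg_order {ρ x z w : T} (hz : z ∈ geoSeg ρ x) (hw : w ∈ geoSeg ρ x)
    (hle : dist ρ z ≤ dist ρ w) : z ∈ geoSeg ρ w := by
  obtain ⟨γ, h0, hL, hiso, him⟩ := ht.geodesic ρ x
  rw [← him] at hz hw
  obtain ⟨s, hs, rfl⟩ := hz
  obtain ⟨t, htt, rfl⟩ := hw
  have hds : dist ρ (γ s) = s := by
    rw [← h0, hiso 0 ⟨le_refl _, dist_nonneg⟩ s hs, abs_of_nonpos (by linarith [hs.1])]; ring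
  have hdt : dist ρ (γ t) = t := by
    rw [← h0, hiso 0 ⟨le_refl _, dist_nonneg⟩ t htt, abs_of_nonpos (by linarith [htt.1])]; ring
  have hst : s ≤ t := by rwa [hds, hdt] at hle
  have hzw : dist (γ s) (γ t) = t - s := by
    rw [hiso s hs t htt, abs_of_nonpos (by linarith)]
    ring
  simp only [geoSeg, mem_setOf_eq]
  rw [hds, hdt, hzw]; ring

lemma geoSeg_subset_union (x z z' : T) :
    geoSeg x z' ⊆ geoSeg x z ∪ geoSeg z z' := by
  obtain ⟨γ1, h10, h1a, h1iso, h1im⟩ := ht.geodesic x z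
  obtain ⟨γ2, h20, h2b, h2iso, h2im⟩ := ht.geodesic z z'
  set a := dist x z with ha
  set b := dist z z' with hb
  have ha0 : 0 ≤ a := dist_nonneg
  have hb0 : 0 ≤ b := dist_nonneg
  set S : Set ℝ := {t | t ∈ Icc (0:ℝ) b ∧ γ2 t ∈ geoSeg x z} with hSdef
  have hS0 : (0:ℝ) ∈ S := ⟨⟨le_refl _, hb0⟩, by rw [h20]; exact right_mem_geoSeg x z⟩
  have hSclosed : IsClosed S := by
    have h1 : S = Icc (0:ℝ) b ∩ γ2 ⁻¹' geoSeg x z := rfl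
    rw [h1]
    exact (iso_continuousOn h2iso).preimage_isClosed_of_isClosed isClosed_Icc (isClosed_geoSeg x z)
  have hSbdd : BddAbove S := ⟨b, fun t htS => htS.1.2⟩
  set t0 := sSup S with ht0def
  have ht0S : t0 ∈ S := hSclosed.csSup_mem ⟨0, hS0⟩ hSbdd
  obtain ⟨ht0Icc, hmgeo⟩ := ht0S
  obtain ⟨s0, hs0Icc, hs0⟩ : ∃ s ∈ Icc (0:ℝ) a, γ1 s = γ2 t0 := by
    rw [← h1im] at hmgeo; exact hmgeo
  set L := s0 + (b - t0) with hLdef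
  have hL0 : 0 ≤ L := by
    have := hs0Icc.1; have := ht0Icc.2; simp only [hLdef]; linarith
  rcases eq_or_lt_of_le hL0 with hLz | hLpos
  · -- degenerate: x = z'
    have hs00 : s0 = 0 := by have := hs0Icc.1; have := ht0Icc.2; linarith
    have ht0b : t0 = b := by have := hs0Icc.1; have := ht0Icc.2; linarith
    have hxz' : x = z' := by
      rw [← h10, ← h2b, ← ht0b, ← hs00, hs0]
    rw [← hxz', geoSeg_self]
    exact singleton_subset_iff.mpr (Or.inl (left_mem_geoSeg x z))
  · set g : ℝ → T := fun t => if t ≤ s0 then γ1 t else γ2 (t - s0 + t0) with hgdef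
    have hIccsub1 : Icc (0:ℝ) L ∩ Iic s0 ⊆ Icc (0:ℝ) a :=
      fun t htm => ⟨htm.1.1, le_trans htm.2 hs0Icc.2⟩
    have hmap2 : ∀ t ∈ Icc (0:ℝ) L ∩ Ici s0, t - s0 + t0 ∈ Icc (0:ℝ) b := by
      intro t htm
      constructor
      · have := ht0Icc.1; have := htm.2; simp only [mem_Ici] at *; linarith
      · have := htm.1.2; simp only [hLdef] at this; linarith
    have hgcont : ContinuousOn g (Icc (0:ℝ) L) := by
      apply ContinuousOn.if
      · intro p hp
        have hfr : p ∈ frontier (Iic s0) := hp.2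
        rw [frontier_Iic] at hfr
        simp only [mem_singleton_iff] at hfr
        subst hfr
        simp only [hs0, sub_self, zero_add]
      · have hcl : closure {t : ℝ | t ≤ s0} = Iic s0 := by
          rw [show {t : ℝ | t ≤ s0} = Iic s0 from rfl, closure_Iic]
        rw [hcl]
        exact (iso_continuousOn h1iso).mono hIccsub1
      · have hcl : closure {t : ℝ | ¬ t ≤ s0} = Ici s0 := by
          rw [show {t : ℝ | ¬ t ≤ s0} = Ioi s0 by ext p; simp [not_le], closure_Ioi]
        rw [hcl]
        apply (iso_continuousOn h2iso).comp
        · exact (continuous_id.sub continuous_const).add continuous_const |>.continuousOn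
        · exact hmap2
    have hginj : InjOn g (Icc (0:ℝ) L) := by
      intro t1 ht1 t2 ht2 heq
      have key : ∀ p q : ℝ, p ∈ Icc (0:ℝ) L → q ∈ Icc (0:ℝ) L → p ≤ s0 → ¬ q ≤ s0 →
          g p ≠ g q := by
        intro p q hpI hqI hps hqs
        simp only [hgdef, if_pos hps, if_neg hqs]
        intro hpq
        have hqS : q - s0 + t0 ∈ S := by
          refine ⟨hmap2 q ⟨hqI, le_of_not_ge hqs⟩, ?_⟩
          rw [← hpq, ← h1im]
          exact mem_image_of_mem _ ⟨hpI.1, le_trans hps hs0Icc.2⟩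
        have : q - s0 + t0 ≤ t0 := le_csSup hSbdd hqS
        have := lt_of_not_ge hqs
        linarith
      by_cases h1c : t1 ≤ s0 <;> by_cases h2c : t2 ≤ s0
      · have := iso_injOn h1iso (hIccsub1 ⟨ht1, h1c⟩) (hIccsub1 ⟨ht2, h2c⟩)
        simp only [hgdef, if_pos h1c, if_pos h2c] at heq
        exact this heq
      · exact absurd heq (key t1 t2 ht1 ht2 h1c h2c)
      · exact absurd heq.symm (key t2 t1 ht2 ht1 h2c h1c)
      · simp only [hgdef, if_neg h1c, if_neg h2c] at heq
        have := iso_injOn h2iso (hmap2 t1 ⟨ht1, le_of_lt (lt_of_not_ge h1c)⟩)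
          (hmap2 t2 ⟨ht2, le_of_lt (lt_of_not_ge h2c)⟩) heq
        linarith
    set f : ℝ → T := fun r => g (L * r) with hfdef
    have hmaps : ∀ r ∈ Icc (0:ℝ) 1, L * r ∈ Icc (0:ℝ) L := by
      intro r hr
      constructor
      · exact mul_nonneg hL0 hr.1
      · nlinarith [hr.1, hr.2]
    have hfcont : ContinuousOn f (Icc (0:ℝ) 1) :=
      hgcont.comp (continuous_const.mul continuous_id).continuousOn hmaps
    have hfinj : InjOn f (Icc (0:ℝ) 1) := by
      intro r1 hr1 r2 hr2 heq
      have := hginj (hmaps r1 hr1) (hmaps r2 hr2) heq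
      have hL' : L ≠ 0 := ne_of_gt hLpos
      field_simp at this
      tauto
    have hf0 : f 0 = x := by
      simp only [hfdef, mul_zero, hgdef, if_pos hs0Icc.1, h10]
    have hf1 : f 1 = z' := by
      simp only [hfdef, mul_one, hgdef]
      by_cases hc : L ≤ s0
      · have hbt : t0 = b := by simp only [hLdef] at hc; linarith [ht0Icc.2]
        have hLs : L = s0 := by simp only [hLdef]; rw [hbt]; ring
        rw [if_pos hc, hLs, hs0, hbt, h2b]
      · rw [if_neg hc]
        have : L - s0 + t0 = b := by simp only [hLdef]; ring
        rw [this, h2b]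
    have him := ht.loopless x z' f hfcont hfinj hf0 hf1
    rw [← him]
    rintro w ⟨r, hr, rfl⟩
    have hLr := hmaps r hr
    simp only [hfdef, hgdef]
    by_cases hc : L * r ≤ s0
    · rw [if_pos hc]
      left
      rw [← h1im]
      exact mem_image_of_mem _ ⟨hLr.1, le_trans hc hs0Icc.2⟩
    · rw [if_neg hc]
      right
      rw [← h2im]
      exact mem_image_of_mem _ (hmap2 (L * r) ⟨hLr, le_of_lt (lt_of_not_ge hc)⟩)


omit ht in
lemma dist_left_le {x y z : T} (h : z ∈ geoSeg x y) : dist x z ≤ dist x y := by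
  have := dist_nonneg (x := z) (y := y); simp only [geoSeg, mem_setOf_eq] at h; linarith

omit ht in
lemma geoSeg_comm (x y : T) : geoSeg x y = geoSeg y x := by
  ext z; simp only [geoSeg, mem_setOf_eq, dist_comm z y, dist_comm x z, dist_comm x y]
  constructor <;> intro h <;> linarith

omit ht in
lemma notMem_geoSeg_near {c z z' : T} (hz : z ≠ c) (hd : dist z z' < dist z c) :
    c ∉ geoSeg z z' := by
  intro hc
  have := dist_left_le hc
  linarith

lemma isPreconnected_ball (y : T) (r : ℝ) : IsPreconnected (ball y r) := by
  rcases le_or_gt r 0 with hr | hr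
  · rw [ball_eq_empty.mpr hr]; exact isPreconnected_empty
  · have hball : ball y r = ⋃₀ {s | ∃ z ∈ ball y r, s = geoSeg y z} := by
      ext w
      constructor
      · intro hw
        exact ⟨geoSeg y w, ⟨w, hw, rfl⟩, right_mem_geoSeg y w⟩
      · rintro ⟨s, ⟨z, hz, rfl⟩, hw⟩
        have h1 : dist y w ≤ dist y z := dist_left_le hw
        simp only [mem_ball, dist_comm] at *
        linarith
    rw [hball]
    apply isPreconnected_sUnion y
    · rintro s ⟨z, hz, rfl⟩
      exact left_mem_geoSeg y z
    · rintro s ⟨z, hz, rfl⟩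
      exact isPreconnected_geoSeg ht y z

lemma locallyConnected : LocallyConnectedSpace T := by
  apply locallyConnectedSpace_of_connected_bases (fun x (r : ℝ) => ball x r)
    (fun _ r => 0 < r)
  · exact fun x => nhds_basis_ball
  · exact fun x r _ => isPreconnected_ball ht x r

lemma isOpen_not_sep (c x : T) : IsOpen {z : T | z ≠ c ∧ c ∉ geoSeg x z} := by
  rw [Metric.isOpen_iff]
  rintro z ⟨hzc, hzgeo⟩
  refine ⟨dist z c, dist_pos.mpr hzc, ?_⟩
  rintro z' hz'
  rw [mem_ball, dist_comm] at hz'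
  have hzz' : c ∉ geoSeg z z' := notMem_geoSeg_near hzc hz'
  constructor
  · intro h; subst h; exact hzz' (right_mem_geoSeg z z')
  · intro hc
    rcases geoSeg_subset_union ht x z z' hc with h | h
    · exact hzgeo h
    · exact hzz' h

lemma isOpen_sep (c x : T) : IsOpen {z : T | z ≠ c ∧ c ∈ geoSeg x z} := by
  rw [Metric.isOpen_iff]
  rintro z ⟨hzc, hzgeo⟩
  refine ⟨dist z c, dist_pos.mpr hzc, ?_⟩
  rintro z' hz'
  rw [mem_ball, dist_comm] at hz'
  have hzz' : c ∉ geoSeg z z' := notMem_geoSeg_near hzc hz'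
  constructor
  · intro h; subst h; exact hzz' (right_mem_geoSeg z z')
  · rcases geoSeg_subset_union ht x z' z hzgeo with h | h
    · exact h
    · exact absurd (by rwa [geoSeg_comm]) hzz'

/-- the separation criterion: two points not equal to `c` are in the same connected
component of `{c}ᶜ` iff `c` is not on the segment joining them. -/
lemma comp_eq_iff {c x y : T} (hx : x ≠ c) (hy : y ≠ c) :
    connectedComponentIn ({c}ᶜ : Set T) x = connectedComponentIn ({c}ᶜ : Set T) y ↔
      c ∉ geoSeg x y := by
  constructor
  · intro heq hc
    have hU := isOpen_not_sep ht c x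
    have hV := isOpen_sep ht c x
    have hpc : IsPreconnected (connectedComponentIn ({c}ᶜ : Set T) x) :=
      isPreconnected_connectedComponentIn
    have hsub : connectedComponentIn ({c}ᶜ : Set T) x ⊆
        {z : T | z ≠ c ∧ c ∉ geoSeg x z} ∪ {z : T | z ≠ c ∧ c ∈ geoSeg x z} := by
      intro z hz
      have hzc : z ∈ ({c}ᶜ : Set T) := connectedComponentIn_subset _ _ hz
      simp only [mem_compl_iff, mem_singleton_iff] at hzc
      by_cases h : c ∈ geoSeg x z
      · exact Or.inr ⟨hzc, h⟩
      · exact Or.inl ⟨hzc, h⟩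
    have hxU : x ∈ connectedComponentIn ({c}ᶜ : Set T) x ∩ {z : T | z ≠ c ∧ c ∉ geoSeg x z} := by
      refine ⟨mem_connectedComponentIn (by simpa using hx), hx, ?_⟩
      rw [geoSeg_self]
      simpa using (Ne.symm hx)
    have hyV : y ∈ connectedComponentIn ({c}ᶜ : Set T) x ∩ {z : T | z ≠ c ∧ c ∈ geoSeg x z} := by
      refine ⟨?_, hy, hc⟩
      rw [heq]
      exact mem_connectedComponentIn (by simpa using hy)
    obtain ⟨w, _, ⟨_, hw1⟩, ⟨_, hw2⟩⟩ := hpc _ _ hU hV hsub ⟨x, hxU⟩ ⟨y, hyV⟩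
    exact hw1 hw2
  · intro hc
    have hsub : geoSeg x y ⊆ ({c}ᶜ : Set T) := by
      intro w hw
      simp only [mem_compl_iff, mem_singleton_iff]
      rintro rfl
      exact hc hw
    have h1 : geoSeg x y ⊆ connectedComponentIn ({c}ᶜ : Set T) x :=
      (isPreconnected_geoSeg ht x y).subset_connectedComponentIn (left_mem_geoSeg x y) hsub
    exact connectedComponentIn_eq (h1 (right_mem_geoSeg x y))

end RTreeAux

namespace RTreeAux

variable {T : Type*} [MetricSpace T] (P : PlaneRTree T)

lemma cca_mem_geoSeg (x y : T) : P.cca x y ∈ geoSeg x y := by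
  have ht := P.tree
  set ρ := P.root with hρ
  set c := P.cca x y with hc
  have hcx : c ∈ geoSeg ρ x := (P.cca_mem x y).1
  have hcy : c ∈ geoSeg ρ y := (P.cca_mem x y).2
  have hinter : ∀ z, z ∈ geoSeg c x → z ∈ geoSeg c y → z = c := by
    intro z hz1 hz2
    obtain ⟨hzx, he1⟩ := geoSeg_trans hcx hz1
    obtain ⟨hzy, he2⟩ := geoSeg_trans hcy hz2
    have hmax := P.cca_max x y z ⟨hzx, hzy⟩
    have h0 : dist c z ≤ 0 := by linarith
    have hnn := dist_nonneg (x := c) (y := z)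
    exact (dist_eq_zero.mp (le_antisymm h0 hnn)).symm
  have hsub : geoSeg x y ⊆ geoSeg x c ∪ geoSeg c y := geoSeg_subset_union ht x c y
  obtain ⟨m, hm, hm1, hm2⟩ :=
    (isPreconnected_closed_iff.mp (isPreconnected_geoSeg ht x y)) (geoSeg x c) (geoSeg c y)
      (isClosed_geoSeg x c) (isClosed_geoSeg c y) hsub
      ⟨x, left_mem_geoSeg x y, left_mem_geoSeg x c⟩
      ⟨y, right_mem_geoSeg x y, right_mem_geoSeg c y⟩
  have : m = c := hinter m (by rwa [geoSeg_comm]) hm2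
  rwa [this] at hm

/-- full characterisation of the closest common ancestor. -/
lemma cca_eq_iff (x y b : T) :
    P.cca x y = b ↔
      b ∈ geoSeg P.root x ∧ b ∈ geoSeg P.root y ∧ b ∈ geoSeg x y := by
  have ht := P.tree
  constructor
  · rintro rfl
    exact ⟨(P.cca_mem x y).1, (P.cca_mem x y).2, cca_mem_geoSeg P x y⟩
  · rintro ⟨hb1, hb2, hb3⟩
    set ρ := P.root with hρ
    set c := P.cca x y with hc
    have hcx : c ∈ geoSeg ρ x := (P.cca_mem x y).1
    have hcy : c ∈ geoSeg ρ y := (P.cca_mem x y).2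
    have hc3 : c ∈ geoSeg x y := cca_mem_geoSeg P x y
    have hle : dist ρ b ≤ dist ρ c := P.cca_max x y b ⟨hb1, hb2⟩
    have hbc : b ∈ geoSeg ρ c := geoSeg_order ht hb1 hcx hle
    simp only [geoSeg, mem_setOf_eq] at hb1 hb2 hb3 hcx hcy hc3 hbc
    have d1 : dist b x = dist x b := dist_comm b x
    have d2 : dist b y = dist y b := dist_comm b y
    have d3 : dist c x = dist x c := dist_comm c x
    have d4 : dist c y = dist y c := dist_comm c y
    have d5 : dist b c = dist c b := dist_comm b c
    have hbc0 : dist b c = 0 := by linarith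
    exact (dist_eq_zero.mp hbc0).symm

variable {D : Set T}

/-- every `c` separating three pairwise–distinct directions (two of them away from the
root) is a closest common ancestor of two points of the dense set `D`. -/
lemma branch_mem (hDd : Dense D) (c p q : T) (hp : p ≠ c) (hq : q ≠ c) (hρ : P.root ≠ c)
    (h1 : c ∈ geoSeg P.root p) (h2 : c ∈ geoSeg P.root q) (h3 : c ∈ geoSeg p q) :
    ∃ d1 ∈ D, ∃ d2 ∈ D, P.cca d1 d2 = c := by
  have ht := P.tree
  haveI := locallyConnected ht
  have hopen : IsOpen ({c}ᶜ : Set T) := isOpen_compl_singleton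
  have hCp : IsOpen (connectedComponentIn ({c}ᶜ : Set T) p) := hopen.connectedComponentIn
  have hCq : IsOpen (connectedComponentIn ({c}ᶜ : Set T) q) := hopen.connectedComponentIn
  obtain ⟨d1, hd1D, hd1⟩ := hDd.exists_mem_open hCp
    ⟨p, mem_connectedComponentIn (by simpa using hp)⟩
  obtain ⟨d2, hd2D, hd2⟩ := hDd.exists_mem_open hCq
    ⟨q, mem_connectedComponentIn (by simpa using hq)⟩
  have hd1c : d1 ≠ c := by
    have := connectedComponentIn_subset ({c}ᶜ : Set T) p hd1; simpa using this
  have hd2c : d2 ≠ c := by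
    have := connectedComponentIn_subset ({c}ᶜ : Set T) q hd2; simpa using this
  have he1 : connectedComponentIn ({c}ᶜ : Set T) p = connectedComponentIn ({c}ᶜ : Set T) d1 :=
    connectedComponentIn_eq hd1
  have he2 : connectedComponentIn ({c}ᶜ : Set T) q = connectedComponentIn ({c}ᶜ : Set T) d2 :=
    connectedComponentIn_eq hd2
  refine ⟨d1, hd1D, d2, hd2D, (cca_eq_iff P d1 d2 c).mpr ⟨?_, ?_, ?_⟩⟩
  · by_contra h
    have := (comp_eq_iff ht hρ hd1c).mpr h
    rw [← he1] at this
    exact (comp_eq_iff ht hρ hp).mp this h1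
  · by_contra h
    have := (comp_eq_iff ht hρ hd2c).mpr h
    rw [← he2] at this
    exact (comp_eq_iff ht hρ hq).mp this h2
  · by_contra h
    have := (comp_eq_iff ht hd1c hd2c).mpr h
    rw [← he1, ← he2] at this
    exact (comp_eq_iff ht hp hq).mp this h3

/-- away from branch points and the root, the angle of a point in front is `1/2`. -/
lemma u_eq_half (hDd : Dense D) (x y : T) (hxy : x ≠ y) (hxρ : x ≠ P.root)
    (hgeo : x ∈ geoSeg P.root y) (hB : ∀ d1 ∈ D, ∀ d2 ∈ D, P.cca d1 d2 ≠ x) :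
    P.u x y = 1/2 := by
  have ht := P.tree
  have hρx : P.root ≠ x := Ne.symm hxρ
  have hyx : y ≠ x := Ne.symm hxy
  have hcomp_ρy : connectedComponentIn ({x}ᶜ : Set T) P.root ≠
      connectedComponentIn ({x}ᶜ : Set T) y := by
    intro h
    exact (comp_eq_iff ht hρx hyx).mp h hgeo
  have hall : ∀ z, z ≠ x →
      connectedComponentIn ({x}ᶜ : Set T) z = connectedComponentIn ({x}ᶜ : Set T) P.root ∨
      connectedComponentIn ({x}ᶜ : Set T) z = connectedComponentIn ({x}ᶜ : Set T) y := by
    intro z hz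
    by_contra hcon
    push_neg at hcon
    obtain ⟨hz1, hz2⟩ := hcon
    have hgz : x ∈ geoSeg P.root z := by
      by_contra h
      exact hz1 ((comp_eq_iff ht hz hρx).mpr (by rwa [geoSeg_comm]))
    have hgyz : x ∈ geoSeg y z := by
      by_contra h
      exact hz2 ((comp_eq_iff ht hz hyx).mpr (by rwa [geoSeg_comm]))
    obtain ⟨d1, hd1, d2, hd2, hcca⟩ :=
      branch_mem P hDd x y z hyx hz hρx hgeo hgz hgyz
    exact hB d1 hd1 d2 hd2 hcca
  have hset : comps x = {connectedComponentIn ({x}ᶜ : Set T) P.root,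
      connectedComponentIn ({x}ᶜ : Set T) y} := by
    ext C
    constructor
    · rintro ⟨z, hz, rfl⟩
      rcases hall z hz with h | h
      · exact Or.inl h
      · exact Or.inr h
    · rintro (rfl | rfl)
      · exact ⟨P.root, hρx, rfl⟩
      · exact ⟨y, hyx, rfl⟩
  have hncard : (comps x).ncard = 2 := by
    rw [hset]; exact Set.ncard_pair hcomp_ρy
  rcases P.balanced x y hncard with h0 | h12
  · exfalso
    have huu : P.u x y = P.u x P.root := by rw [h0, P.u_root]
    exact hcomp_ρy (((P.u_eq_iff x y P.root hyx hρx).mp huu).symm)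
  · exact h12

lemma measurable_u (hDd : Dense D) (hDc : D.Countable) (b : T) :
    @Measurable T ℝ (borel T) _ (P.u b) := by
  letI : MeasurableSpace T := borel T
  haveI : BorelSpace T := ⟨rfl⟩
  have ht := P.tree
  haveI := locallyConnected ht
  intro A _
  have hkey : P.u b ⁻¹' A =
      (⋃ d ∈ {d ∈ D | d ≠ b ∧ P.u b d ∈ A}, connectedComponentIn ({b}ᶜ : Set T) d)
        ∪ {z | z = b ∧ P.u b b ∈ A} := by
    ext z
    simp only [mem_preimage, mem_union, mem_iUnion, mem_setOf_eq, exists_prop, mem_sep_iff]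
    constructor
    · intro hz
      by_cases hzb : z = b
      · exact Or.inr ⟨hzb, hzb ▸ hz⟩
      · have hopen : IsOpen (connectedComponentIn ({b}ᶜ : Set T) z) :=
          isOpen_compl_singleton.connectedComponentIn
        obtain ⟨d, hdD, hd⟩ := hDd.exists_mem_open hopen
          ⟨z, mem_connectedComponentIn (by simpa using hzb)⟩
        have hdb : d ≠ b := by
          have := connectedComponentIn_subset ({b}ᶜ : Set T) z hd; simpa using this
        have hcomp := connectedComponentIn_eq hd
        have huz : P.u b z = P.u b d := (P.u_eq_iff b z d hzb hdb).mpr hcomp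
        refine Or.inl ⟨d, ⟨hdD, hdb, by rw [← huz]; exact hz⟩, ?_⟩
        rw [← hcomp]
        exact mem_connectedComponentIn (by simpa using hzb)
    · rintro (⟨d, ⟨hdD, hdb, hdA⟩, hzd⟩ | ⟨rfl, hbA⟩)
      · have hzb : z ≠ b := by
          have := connectedComponentIn_subset ({b}ᶜ : Set T) d hzd; simpa using this
        have hcomp : connectedComponentIn ({b}ᶜ : Set T) z =
            connectedComponentIn ({b}ᶜ : Set T) d := (connectedComponentIn_eq hzd).symm
        rw [(P.u_eq_iff b z d hzb hdb).mpr hcomp]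
        exact hdA
      · exact hbA
  rw [hkey]
  apply MeasurableSet.union
  · exact MeasurableSet.biUnion (hDc.mono (sep_subset _ _)) fun d _ =>
      isOpen_compl_singleton.connectedComponentIn.measurableSet
  · by_cases hb : P.u b b ∈ A
    · have he : {z : T | z = b ∧ P.u b b ∈ A} = {b} := by ext; simp [hb]
      rw [he]; exact measurableSet_singleton b
    · have he : {z : T | z = b ∧ P.u b b ∈ A} = ∅ := by ext; simp [hb]
      rw [he]; exact MeasurableSet.empty

end RTreeAux

/-- The sets `{(α,β) : α → β}` and `{(α,β) : α ↷ β}` are Borel subsets of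
`(T × [0,1])²` for (the Borel σ-algebra of) the product topology. -/
theorem frontOf_leftOf_graph_measurable {T : Type*} [MetricSpace T] (P : PlaneRTree T) :
    MeasurableSet[borel ((T × ℝ) × (T × ℝ))]
      {q : (T × ℝ) × (T × ℝ) | q.1.2 ∈ Icc (0:ℝ) 1 ∧ q.2.2 ∈ Icc (0:ℝ) 1 ∧
        P.frontOf q.1 q.2} ∧
    MeasurableSet[borel ((T × ℝ) × (T × ℝ))]
      {q : (T × ℝ) × (T × ℝ) | q.1.2 ∈ Icc (0:ℝ) 1 ∧ q.2.2 ∈ Icc (0:ℝ) 1 ∧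
        P.leftOf q.1 q.2} := by
  classical
  have ht := P.tree
  haveI := P.sep
  letI : MeasurableSpace T := borel T
  haveI : BorelSpace T := ⟨rfl⟩
  haveI : SecondCountableTopology T := UniformSpace.secondCountable_of_separable T
  have hbeq : borel ((T × ℝ) × (T × ℝ)) =
      (inferInstance : MeasurableSpace ((T × ℝ) × (T × ℝ))) :=
    (BorelSpace.measurable_eq (α := (T × ℝ) × (T × ℝ))).symm
  rw [hbeq]
  obtain ⟨D, hDc, hDd⟩ := TopologicalSpace.exists_countable_dense T
  set B : Set T := insert P.root ((fun p : T × T => P.cca p.1 p.2) '' (D ×ˢ D)) with hBdef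
  have hBc : B.Countable := (Set.Countable.image (hDc.prod hDc) _).insert P.root
  have hBmem : ∀ d1 ∈ D, ∀ d2 ∈ D, P.cca d1 d2 ∈ B := fun d1 h1 d2 h2 =>
    mem_insert_of_mem _ ⟨(d1, d2), mk_mem_prod h1 h2, rfl⟩
  have hρB : P.root ∈ B := mem_insert _ _
  have hhalf : ∀ x y : T, x ∉ B → x ≠ y → x ∈ geoSeg P.root y → P.u x y = 1/2 := by
    intro x y hxB hxy hgeo
    refine RTreeAux.u_eq_half P hDd x y hxy (fun h => hxB (by rw [h]; exact hρB)) hgeo ?_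
    intro d1 hd1 d2 hd2 hc
    exact hxB (by rw [← hc]; exact hBmem d1 hd1 d2 hd2)
  have hccax : ∀ x y : T, P.cca x y = x ↔ x ∈ geoSeg P.root y := by
    intro x y
    rw [RTreeAux.cca_eq_iff P]
    exact ⟨fun h => h.2.1,
      fun h => ⟨RTreeAux.right_mem_geoSeg P.root x, h, RTreeAux.left_mem_geoSeg x y⟩⟩
  have hccay : ∀ x y : T, P.cca x y = y ↔ y ∈ geoSeg P.root x := by
    intro x y
    rw [RTreeAux.cca_eq_iff P]
    exact ⟨fun h => h.1,
      fun h => ⟨h, RTreeAux.right_mem_geoSeg P.root y, RTreeAux.right_mem_geoSeg x y⟩⟩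
  have hccaB : ∀ x y : T, P.cca x y ≠ x → P.cca x y ≠ y → P.cca x y ∈ B := by
    intro x y hcx hcy
    by_cases hcρ : P.cca x y = P.root
    · rw [hcρ]; exact hρB
    · obtain ⟨h1, h2, h3⟩ := (RTreeAux.cca_eq_iff P x y (P.cca x y)).mp rfl
      obtain ⟨d1, hd1, d2, hd2, hc⟩ := RTreeAux.branch_mem P hDd (P.cca x y) x y
        (Ne.symm hcx) (Ne.symm hcy) (Ne.symm hcρ) h1 h2 h3
      rw [← hc]; exact hBmem d1 hd1 d2 hd2
  -- continuity / measurability toolkit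
  have c11 : Continuous fun q : (T × ℝ) × (T × ℝ) => q.1.1 := continuous_fst.comp continuous_fst
  have c21 : Continuous fun q : (T × ℝ) × (T × ℝ) => q.2.1 := continuous_fst.comp continuous_snd
  have c12 : Continuous fun q : (T × ℝ) × (T × ℝ) => q.1.2 := continuous_snd.comp continuous_fst
  have c22 : Continuous fun q : (T × ℝ) × (T × ℝ) => q.2.2 := continuous_snd.comp continuous_snd
  have m21 : Measurable fun q : (T × ℝ) × (T × ℝ) => q.2.1 := c21.measurable
  have m11 : Measurable fun q : (T × ℝ) × (T × ℝ) => q.1.1 := c11.measurable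
  have m12 : Measurable fun q : (T × ℝ) × (T × ℝ) => q.1.2 := c12.measurable
  have m22 : Measurable fun q : (T × ℝ) × (T × ℝ) => q.2.2 := c22.measurable
  have mub : ∀ b : T, Measurable (P.u b) := fun b => RTreeAux.measurable_u P hDd hDc b
  have mIv : MeasurableSet {q : (T × ℝ) × (T × ℝ) | q.1.2 ∈ Icc (0:ℝ) 1} :=
    m12 measurableSet_Icc
  have mIw : MeasurableSet {q : (T × ℝ) × (T × ℝ) | q.2.2 ∈ Icc (0:ℝ) 1} :=
    m22 measurableSet_Icc
  have mxy : MeasurableSet {q : (T × ℝ) × (T × ℝ) | q.1.1 = q.2.1} :=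
    (isClosed_eq c11 c21).measurableSet
  have mnxy : MeasurableSet {q : (T × ℝ) × (T × ℝ) | ¬ q.1.1 = q.2.1} := mxy.compl
  have mseg : ∀ f g h : (T × ℝ) × (T × ℝ) → T, Continuous f → Continuous g → Continuous h →
      MeasurableSet {q : (T × ℝ) × (T × ℝ) | g q ∈ geoSeg (f q) (h q)} := by
    intro f g h hf hg hh
    exact (isClosed_eq ((hf.dist hg).add (hg.dist hh)) (hf.dist hh)).measurableSet
  have mB1 : MeasurableSet {q : (T × ℝ) × (T × ℝ) | q.1.1 ∈ B} := by
    have hrw : {q : (T × ℝ) × (T × ℝ) | q.1.1 ∈ B} = ⋃ b ∈ B, {q | q.1.1 = b} := by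
      ext q; simp
    rw [hrw]
    exact MeasurableSet.biUnion hBc fun b _ => (isClosed_eq c11 continuous_const).measurableSet
  have mB2 : MeasurableSet {q : (T × ℝ) × (T × ℝ) | q.2.1 ∈ B} := by
    have hrw : {q : (T × ℝ) × (T × ℝ) | q.2.1 ∈ B} = ⋃ b ∈ B, {q | q.2.1 = b} := by
      ext q; simp
    rw [hrw]
    exact MeasurableSet.biUnion hBc fun b _ => (isClosed_eq c21 continuous_const).measurableSet
  constructor
  · -- frontOf
    have keyF : ∀ α β : T × ℝ, P.frontOf α β ↔
        ((α.1 = β.1 ∧ β.2 = α.2) ∨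
          (∃ b ∈ B, α.1 = b ∧ ¬ α.1 = β.1 ∧ b ∈ geoSeg P.root β.1 ∧ P.u b β.1 = α.2) ∨
          (α.1 ∉ B ∧ ¬ α.1 = β.1 ∧ α.1 ∈ geoSeg P.root β.1 ∧ α.2 = 1/2)) := by
      intro α β
      simp only [PlaneRTree.frontOf, PlaneRTree.ang]
      by_cases hxy : α.1 = β.1
      · rw [if_pos hxy]
        constructor
        · rintro ⟨_, h⟩; exact Or.inl ⟨hxy, h⟩
        · rintro (⟨_, h⟩ | ⟨b, _, _, hne, _⟩ | ⟨_, hne, _⟩)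
          · exact ⟨by rw [hxy]; exact RTreeAux.right_mem_geoSeg P.root β.1, h⟩
          · exact absurd hxy hne
          · exact absurd hxy hne
      · rw [if_neg hxy]
        constructor
        · rintro ⟨hg, hu⟩
          by_cases hB : α.1 ∈ B
          · exact Or.inr (Or.inl ⟨α.1, hB, rfl, hxy, hg, hu⟩)
          · exact Or.inr (Or.inr ⟨hB, hxy, hg, by rw [← hu, hhalf α.1 β.1 hB hxy hg]⟩)
        · rintro (⟨h, _⟩ | ⟨b, _, rfl, _, hg, hu⟩ | ⟨hB, _, hg, hv⟩)
          · exact absurd h hxy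
          · exact ⟨hg, hu⟩
          · exact ⟨hg, by rw [hv, hhalf α.1 β.1 hB hxy hg]⟩
    have hdec : {q : (T × ℝ) × (T × ℝ) | q.1.2 ∈ Icc (0:ℝ) 1 ∧ q.2.2 ∈ Icc (0:ℝ) 1 ∧
        P.frontOf q.1 q.2} =
        {q : (T × ℝ) × (T × ℝ) | q.1.2 ∈ Icc (0:ℝ) 1} ∩
          {q : (T × ℝ) × (T × ℝ) | q.2.2 ∈ Icc (0:ℝ) 1} ∩
        ( {q : (T × ℝ) × (T × ℝ) | q.1.1 = q.2.1 ∧ q.2.2 = q.1.2}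
          ∪ (⋃ b ∈ B, {q : (T × ℝ) × (T × ℝ) | q.1.1 = b ∧ ¬ q.1.1 = q.2.1
              ∧ b ∈ geoSeg P.root q.2.1 ∧ P.u b q.2.1 = q.1.2})
          ∪ {q : (T × ℝ) × (T × ℝ) | q.1.1 ∉ B ∧ ¬ q.1.1 = q.2.1
              ∧ q.1.1 ∈ geoSeg P.root q.2.1 ∧ q.1.2 = 1/2} ) := by
      ext q
      simp only [mem_setOf_eq, mem_inter_iff, mem_union, mem_iUnion, exists_prop,
        keyF q.1 q.2]
      simp only [or_assoc, and_assoc]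
    rw [hdec]
    refine (mIv.inter mIw).inter (MeasurableSet.union (MeasurableSet.union ?_ ?_) ?_)
    · exact mxy.inter (isClosed_eq c22 c12).measurableSet
    · refine MeasurableSet.biUnion hBc fun b _ => ?_
      exact (isClosed_eq c11 continuous_const).measurableSet.inter (mnxy.inter
        ((mseg _ _ _ continuous_const continuous_const c21).inter
          (measurableSet_eq_fun ((mub b).comp m21) m12)))
    · exact mB1.compl.inter (mnxy.inter
        ((mseg _ _ _ continuous_const c11 c21).inter
          (isClosed_eq c12 continuous_const).measurableSet))
  · -- leftOf
    have keyL : ∀ α β : T × ℝ, P.leftOf α β ↔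
        ((α.1 = β.1 ∧ α.2 < β.2) ∨
          (∃ b ∈ B, α.1 = b ∧ ¬ α.1 = β.1 ∧ b ∈ geoSeg P.root β.1 ∧ α.2 < P.u b β.1) ∨
          (α.1 ∉ B ∧ ¬ α.1 = β.1 ∧ α.1 ∈ geoSeg P.root β.1 ∧ α.2 < 1/2) ∨
          (∃ b ∈ B, β.1 = b ∧ ¬ α.1 = β.1 ∧ b ∈ geoSeg P.root α.1 ∧ P.u b α.1 < β.2) ∨
          (β.1 ∉ B ∧ ¬ α.1 = β.1 ∧ β.1 ∈ geoSeg P.root α.1 ∧ 1/2 < β.2) ∨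
          (∃ b ∈ B, b ∈ geoSeg P.root α.1 ∧ b ∈ geoSeg P.root β.1 ∧ b ∈ geoSeg α.1 β.1 ∧
            ¬ b = α.1 ∧ ¬ b = β.1 ∧ P.u b α.1 < P.u b β.1)) := by
      intro α β
      constructor
      · intro hlt
        unfold PlaneRTree.leftOf at hlt
        by_cases hxy : α.1 = β.1
        · have hc : P.cca α.1 β.1 = α.1 :=
            (hccax α.1 β.1).mpr (by rw [hxy]; exact RTreeAux.right_mem_geoSeg P.root β.1)
          rw [hc] at hlt
          simp only [PlaneRTree.ang, if_pos rfl, if_pos hxy] at hlt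
          exact Or.inl ⟨hxy, hlt⟩
        · by_cases hcx : P.cca α.1 β.1 = α.1
          · have hg := (hccax α.1 β.1).mp hcx
            rw [hcx] at hlt
            simp only [PlaneRTree.ang, if_pos rfl, if_neg hxy] at hlt
            by_cases hB : α.1 ∈ B
            · exact Or.inr (Or.inl ⟨α.1, hB, rfl, hxy, hg, hlt⟩)
            · refine Or.inr (Or.inr (Or.inl ⟨hB, hxy, hg, ?_⟩))
              rw [← hhalf α.1 β.1 hB hxy hg]; exact hlt
          · by_cases hcy : P.cca α.1 β.1 = β.1
            · have hg := (hccay α.1 β.1).mp hcy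
              rw [hcy] at hlt
              have hyx : ¬ β.1 = α.1 := fun h => hxy h.symm
              simp only [PlaneRTree.ang, if_pos rfl, if_neg hyx] at hlt
              by_cases hB : β.1 ∈ B
              · exact Or.inr (Or.inr (Or.inr (Or.inl ⟨β.1, hB, rfl, hxy, hg, hlt⟩)))
              · refine Or.inr (Or.inr (Or.inr (Or.inr (Or.inl ⟨hB, hxy, hg, ?_⟩))))
                rw [← hhalf β.1 α.1 hB hyx hg]; exact hlt
            · obtain ⟨h1, h2, h3⟩ := (RTreeAux.cca_eq_iff P α.1 β.1 (P.cca α.1 β.1)).mp rfl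
              have hB := hccaB α.1 β.1 hcx hcy
              simp only [PlaneRTree.ang, if_neg hcx, if_neg hcy] at hlt
              exact Or.inr (Or.inr (Or.inr (Or.inr (Or.inr
                ⟨P.cca α.1 β.1, hB, h1, h2, h3, hcx, hcy, hlt⟩))))
      · intro hd
        unfold PlaneRTree.leftOf
        rcases hd with ⟨hxy, hvw⟩ | ⟨b, _, hxb, hxy, hg, hlt⟩ | ⟨hB, hxy, hg, hlt⟩ |
          ⟨b, _, hyb, hxy, hg, hlt⟩ | ⟨hB, hxy, hg, hlt⟩ | ⟨b, _, h1, h2, h3, hbx, hby, hlt⟩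
        · have hc : P.cca α.1 β.1 = α.1 :=
            (hccax α.1 β.1).mpr (by rw [hxy]; exact RTreeAux.right_mem_geoSeg P.root β.1)
          rw [hc]
          simp only [PlaneRTree.ang, if_pos rfl, if_pos hxy]
          exact hvw
        · rw [← hxb] at hg hlt
          have hc : P.cca α.1 β.1 = α.1 := (hccax α.1 β.1).mpr hg
          rw [hc]
          simp only [PlaneRTree.ang, if_pos rfl, if_neg hxy]
          exact hlt
        · have hc : P.cca α.1 β.1 = α.1 := (hccax α.1 β.1).mpr hg
          rw [hc]
          simp only [PlaneRTree.ang, if_pos rfl, if_neg hxy]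
          rw [hhalf α.1 β.1 hB hxy hg]
          exact hlt
        · rw [← hyb] at hg hlt
          have hc : P.cca α.1 β.1 = β.1 := (hccay α.1 β.1).mpr hg
          rw [hc]
          have hyx : ¬ β.1 = α.1 := fun h => hxy h.symm
          simp only [PlaneRTree.ang, if_pos rfl, if_neg hyx]
          exact hlt
        · have hc : P.cca α.1 β.1 = β.1 := (hccay α.1 β.1).mpr hg
          rw [hc]
          have hyx : ¬ β.1 = α.1 := fun h => hxy h.symm
          simp only [PlaneRTree.ang, if_pos rfl, if_neg hyx]
          rw [hhalf β.1 α.1 hB hyx hg]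
          exact hlt
        · have hc : P.cca α.1 β.1 = b := (RTreeAux.cca_eq_iff P α.1 β.1 b).mpr ⟨h1, h2, h3⟩
          rw [hc]
          simp only [PlaneRTree.ang, if_neg hbx, if_neg hby]
          exact hlt
    have hdec : {q : (T × ℝ) × (T × ℝ) | q.1.2 ∈ Icc (0:ℝ) 1 ∧ q.2.2 ∈ Icc (0:ℝ) 1 ∧
        P.leftOf q.1 q.2} =
        {q : (T × ℝ) × (T × ℝ) | q.1.2 ∈ Icc (0:ℝ) 1} ∩
          {q : (T × ℝ) × (T × ℝ) | q.2.2 ∈ Icc (0:ℝ) 1} ∩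
        ( {q : (T × ℝ) × (T × ℝ) | q.1.1 = q.2.1 ∧ q.1.2 < q.2.2}
          ∪ (⋃ b ∈ B, {q : (T × ℝ) × (T × ℝ) | q.1.1 = b ∧ ¬ q.1.1 = q.2.1
              ∧ b ∈ geoSeg P.root q.2.1 ∧ q.1.2 < P.u b q.2.1})
          ∪ {q : (T × ℝ) × (T × ℝ) | q.1.1 ∉ B ∧ ¬ q.1.1 = q.2.1
              ∧ q.1.1 ∈ geoSeg P.root q.2.1 ∧ q.1.2 < 1/2}
          ∪ (⋃ b ∈ B, {q : (T × ℝ) × (T × ℝ) | q.2.1 = b ∧ ¬ q.1.1 = q.2.1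
              ∧ b ∈ geoSeg P.root q.1.1 ∧ P.u b q.1.1 < q.2.2})
          ∪ {q : (T × ℝ) × (T × ℝ) | q.2.1 ∉ B ∧ ¬ q.1.1 = q.2.1
              ∧ q.2.1 ∈ geoSeg P.root q.1.1 ∧ 1/2 < q.2.2}
          ∪ (⋃ b ∈ B, {q : (T × ℝ) × (T × ℝ) | b ∈ geoSeg P.root q.1.1
              ∧ b ∈ geoSeg P.root q.2.1 ∧ b ∈ geoSeg q.1.1 q.2.1
              ∧ ¬ b = q.1.1 ∧ ¬ b = q.2.1 ∧ P.u b q.1.1 < P.u b q.2.1}) ) := by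
      ext q
      simp only [mem_setOf_eq, mem_inter_iff, mem_union, mem_iUnion, exists_prop,
        keyL q.1 q.2]
      simp only [or_assoc, and_assoc]
    rw [hdec]
    refine (mIv.inter mIw).inter
      (MeasurableSet.union (MeasurableSet.union (MeasurableSet.union (MeasurableSet.union
        (MeasurableSet.union ?_ ?_) ?_) ?_) ?_) ?_)
    · exact mxy.inter (measurableSet_lt m12 m22)
    · refine MeasurableSet.biUnion hBc fun b _ => ?_
      exact (isClosed_eq c11 continuous_const).measurableSet.inter (mnxy.inter
        ((mseg _ _ _ continuous_const continuous_const c21).inter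
          (measurableSet_lt m12 ((mub b).comp m21))))
    · exact mB1.compl.inter (mnxy.inter
        ((mseg _ _ _ continuous_const c11 c21).inter
          (measurableSet_lt m12 measurable_const)))
    · refine MeasurableSet.biUnion hBc fun b _ => ?_
      exact (isClosed_eq c21 continuous_const).measurableSet.inter (mnxy.inter
        ((mseg _ _ _ continuous_const continuous_const c11).inter
          (measurableSet_lt ((mub b).comp m11) m22)))
    · exact mB2.compl.inter (mnxy.inter
        ((mseg _ _ _ continuous_const c21 c11).inter
          (measurableSet_lt measurable_const m22)))
    · refine MeasurableSet.biUnion hBc fun b _ => ?_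
      exact (mseg _ _ _ continuous_const continuous_const c11).inter
        ((mseg _ _ _ continuous_const continuous_const c21).inter
          ((mseg _ _ _ c11 continuous_const c21).inter
            ((isClosed_eq continuous_const c11).measurableSet.compl.inter
              ((isClosed_eq continuous_const c21).measurableSet.compl.inter
                (measurableSet_lt ((mub b).comp m11) ((mub b).comp m21))))))
end

section
/- Let (X,d) be a metric space, let p be a Borel probability measure on X, and let s ≥ 0. If for p-almost every x ∈ X, liminf_{ε→0} (log p(B(x,ε)))/(log ε) ≥ s, then the Hausdorff dimension of X is at least s. -/
/-!
This is the mass distribution principle. For `t < s`, almost every point `x` has a radius below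
which `p (B(x, ε)) ≤ ε ^ t`, and one radius `r` works for a set `A` of positive `p`-measure. A set
of diameter `δ ≤ r` meeting `A` at `x` lies in `B(x, δ)`, so its intersection with `A` has mass at
most `δ ^ t`. Every cover of `A` by such sets therefore has `t`-dimensional cost at least `p A`,
so `μH[t] A ≥ p A > 0` and `dimH X ≥ dimH A ≥ t`.
-/

open MeasureTheory Set Filter Metric Topology
open scoped ENNReal NNReal

theorem Real.le_rpow_of_lt_log_div_log {m ε t : ℝ} (hm : 0 ≤ m) (hε₀ : 0 < ε) (hε₁ : ε < 1)
    (h : t < log m / log ε) : m ≤ ε ^ t := by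
  rcases hm.eq_or_lt with rfl | hm
  · exact rpow_nonneg hε₀.le t
  calc m = ε ^ logb ε m := (rpow_logb hε₀ hε₁.ne hm).symm
    _ ≤ ε ^ t := rpow_le_rpow_of_exponent_ge hε₀ hε₁.le (log_div_log ▸ h).le

theorem measure_le_ediam_rpow_of_closedBall_le {X : Type*} [PseudoMetricSpace X]
    [MeasurableSpace X] {μ : Measure X} {t r : ℝ} (ht : 0 < t) (hr : 0 < r) {x : X}
    (hx : ∀ ε, 0 < ε → ε ≤ r → μ (closedBall x ε) ≤ ENNReal.ofReal ε ^ t)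
    {S : Set X} (hxS : x ∈ S) (hS : ediam S ≤ ENNReal.ofReal r) :
    μ S ≤ ediam S ^ t := by
  have hS_top : ediam S ≠ ∞ := ne_top_of_le_ne_top ENNReal.ofReal_ne_top hS
  have hS_sub : ∀ ε, 0 ≤ ε → ediam S ≤ ENNReal.ofReal ε → S ⊆ closedBall x ε :=
    fun ε hε₀ hε y hy => mem_closedBall.2 <| (edist_le_ofReal hε₀).1 <|
      (edist_le_ediam_of_mem hy hxS).trans hε
  rcases eq_or_ne (ediam S) 0 with hS₀ | hS₀
  · have hlim : Tendsto (fun ε : ℝ => ENNReal.ofReal ε ^ t) (𝓝[>] 0) (𝓝 0) :=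
      ((ENNReal.continuous_rpow_const.comp ENNReal.continuous_ofReal).tendsto' 0 0
        (by simp [ht])).mono_left nhdsWithin_le_nhds
    rw [hS₀, ENNReal.zero_rpow_of_pos ht]
    refine ge_of_tendsto hlim ?_
    filter_upwards [Ioo_mem_nhdsGT hr] with ε hε
    exact (measure_mono (hS_sub ε hε.1.le (by simp [hS₀]))).trans (hx ε hε.1 hε.2.le)
  · have hδ : 0 < (ediam S).toReal := ENNReal.toReal_pos hS₀ hS_top
    calc μ S ≤ μ (closedBall x (ediam S).toReal) :=
          measure_mono (hS_sub _ hδ.le (ENNReal.ofReal_toReal hS_top).ge)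
      _ ≤ ENNReal.ofReal (ediam S).toReal ^ t :=
          hx _ hδ (ENNReal.toReal_le_of_le_ofReal hr.le hS)
      _ = ediam S ^ t := by rw [ENNReal.ofReal_toReal hS_top]

theorem measure_le_hausdorffMeasure_of_closedBall_le {X : Type*} [MetricSpace X]
    [MeasurableSpace X] [BorelSpace X] (μ : Measure X) {t r : ℝ}
    (ht : 0 < t) (hr : 0 < r) {A : Set X}
    (hA : ∀ x ∈ A, ∀ ε, 0 < ε → ε ≤ r → μ (closedBall x ε) ≤ ENNReal.ofReal ε ^ t) :
    μ A ≤ μH[t] A := by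
  have hcover : ∀ S : Set X, ediam S ≤ ENNReal.ofReal r → μ (S ∩ A) ≤ ediam S ^ t := by
    intro S hS
    rcases (S ∩ A).eq_empty_or_nonempty with hSA | ⟨x, hxS, hxA⟩
    · simp [hSA]
    calc μ (S ∩ A) ≤ ediam (S ∩ A) ^ t :=
          measure_le_ediam_rpow_of_closedBall_le ht hr (hA x hxA) ⟨hxS, hxA⟩
            ((ediam_mono inter_subset_left).trans hS)
      _ ≤ ediam S ^ t := ENNReal.rpow_le_rpow (ediam_mono inter_subset_left) ht.le
  have hle : μ.toOuterMeasure.restrict A ≤ OuterMeasure.mkMetric (· ^ t) :=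
    OuterMeasure.le_mkMetric _ _ _ (ENNReal.ofReal_pos.2 hr) fun S hS => by
      simpa only [OuterMeasure.restrict_apply, Measure.coe_toOuterMeasure] using hcover S hS
  calc μ A = μ.toOuterMeasure.restrict A A := by simp
    _ ≤ OuterMeasure.mkMetric (· ^ t) A := hle A
    _ = μH[t] A := by
      rw [Measure.hausdorffMeasure, ← Measure.mkMetric_toOuterMeasure]; rfl

theorem eventually_measure_closedBall_le_of_lt_liminf {X : Type*} [PseudoMetricSpace X]
    [MeasurableSpace X] (μ : Measure X) [IsProbabilityMeasure μ] {x : X} {t : ℝ}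
    (h : t < liminf (fun ε : ℝ => Real.log (μ (closedBall x ε)).toReal / Real.log ε) (𝓝[>] 0)) :
    ∀ᶠ ε in 𝓝[>] 0, μ (closedBall x ε) ≤ ENNReal.ofReal ε ^ t := by
  have hunit : Ioo (0 : ℝ) 1 ∈ 𝓝[>] 0 := Ioo_mem_nhdsGT one_pos
  have hmass_le_one : ∀ ε, (μ (closedBall x ε)).toReal ≤ 1 := fun ε =>
    ENNReal.toReal_le_of_le_ofReal zero_le_one (by simpa using prob_le_one)
  have hbdd : IsBoundedUnder (· ≥ ·) (𝓝[>] (0 : ℝ))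
      fun ε => Real.log (μ (closedBall x ε)).toReal / Real.log ε := by
    refine isBoundedUnder_of_eventually_ge (a := 0) ?_
    filter_upwards [hunit] with ε hε
    exact div_nonneg_of_nonpos (Real.log_nonpos ENNReal.toReal_nonneg (hmass_le_one ε))
      (Real.log_neg hε.1 hε.2).le
  filter_upwards [eventually_lt_of_lt_liminf h hbdd, hunit] with ε hεt hε
  calc μ (closedBall x ε) = ENNReal.ofReal (μ (closedBall x ε)).toReal :=
        (ENNReal.ofReal_toReal (measure_ne_top μ _)).symm
    _ ≤ ENNReal.ofReal (ε ^ t) := ENNReal.ofReal_le_ofReal <|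
        Real.le_rpow_of_lt_log_div_log ENNReal.toReal_nonneg hε.1 hε.2 hεt
    _ = ENNReal.ofReal ε ^ t := (ENNReal.ofReal_rpow_of_pos hε.1).symm

theorem MeasureTheory.Measure.exists_pos_measure_setOf_forall_Ioc_ne_zero {X : Type*}
    [MeasurableSpace X] {μ : Measure X} (hμ : μ ≠ 0) {P : X → ℝ → Prop}
    (h : ∀ᵐ x ∂μ, ∀ᶠ ε in 𝓝[>] 0, P x ε) :
    ∃ r > 0, μ {x | ∀ ε ∈ Ioc 0 r, P x ε} ≠ 0 := by
  set A : ℕ → Set X := fun n => {x | ∀ ε ∈ Ioc 0 (1 / (n + 1 : ℝ)), P x ε}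
  have hA : ∀ᵐ x ∂μ, x ∈ ⋃ n, A n := by
    filter_upwards [h] with x hx
    obtain ⟨δ, hδ, hδP⟩ := Metric.mem_nhdsWithin_iff.1 hx
    obtain ⟨n, hn⟩ := exists_nat_one_div_lt hδ
    refine mem_iUnion.2 ⟨n, fun ε hε => hδP ⟨?_, hε.1⟩⟩
    rw [mem_ball, Real.dist_eq, sub_zero, abs_of_pos hε.1]
    exact hε.2.trans_lt hn
  by_contra! hnull
  have hcompl : ∀ᵐ x ∂μ, x ∉ ⋃ n, A n :=
    measure_eq_zero_iff_ae_notMem.1 (measure_iUnion_null fun n => hnull _ Nat.one_div_pos_of_nat)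
  have := ae_neBot.2 hμ
  obtain ⟨x, hxA, hxA'⟩ := (hA.and hcompl).exists
  exact hxA' hxA

theorem hausdorff_dim_ge_of_ae_liminf_general
    (X : Type*) [MetricSpace X] [MeasurableSpace X] [BorelSpace X]
    (p : Measure X) [IsProbabilityMeasure p] (s : ℝ)
    (h : ∀ᵐ x ∂p, s ≤ liminf
      (fun ε : ℝ => Real.log (p (closedBall x ε)).toReal / Real.log ε)
      (nhdsWithin 0 (Ioi 0))) :
    ENNReal.ofReal s ≤ dimH (Set.univ : Set X) := by
  refine ENNReal.le_of_forall_nnreal_lt fun t hts => ?_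
  rcases eq_or_ne t 0 with rfl | ht₀
  · exact zero_le
  have ht : (0 : ℝ) < t := NNReal.coe_pos.2 (pos_iff_ne_zero.2 ht₀)
  have hball : ∀ᵐ x ∂p, ∀ᶠ ε in 𝓝[>] 0, p (closedBall x ε) ≤ ENNReal.ofReal ε ^ (t : ℝ) :=
    h.mono fun x hx =>
      eventually_measure_closedBall_le_of_lt_liminf p ((ENNReal.coe_lt_ofReal.1 hts).trans_le hx)
  obtain ⟨r, hr, hA⟩ := Measure.exists_pos_measure_setOf_forall_Ioc_ne_zero
    (IsProbabilityMeasure.ne_zero p) hball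
  have hμH : μH[t] {x | ∀ ε ∈ Ioc 0 r, p (closedBall x ε) ≤ ENNReal.ofReal ε ^ (t : ℝ)} ≠ 0 :=
    ne_bot_of_le_ne_bot hA <| measure_le_hausdorffMeasure_of_closedBall_le p ht hr
      fun x hx ε hε₀ hεr => hx ε ⟨hε₀, hεr⟩
  exact (le_dimH_of_hausdorffMeasure_ne_zero hμH).trans (dimH_mono (subset_univ _))

/-- Frostman-type lower bound for the Hausdorff dimension: if `p` is a Borel
probability measure on a metric space `X` such that `p`-almost everywhere
`liminf_{ε→0} log p(B(x,ε)) / log ε ≥ s`, then `dim_H(X) ≥ s`. -/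
theorem hausdorff_dim_ge_of_ae_liminf
    (X : Type*) [MetricSpace X] [MeasurableSpace X] [BorelSpace X]
    (p : Measure X) [IsProbabilityMeasure p] (s : ℝ) (hs : 0 ≤ s)
    (h : ∀ᵐ x ∂p, s ≤ liminf
      (fun ε : ℝ => Real.log (p (closedBall x ε)).toReal / Real.log ε)
      (nhdsWithin 0 (Ioi 0))) :
    ENNReal.ofReal s ≤ dimH (Set.univ : Set X) :=
  hausdorff_dim_ge_of_ae_liminf_general X p s h
end

section
/- Let (y_i)_{i≥1} be a strictly increasing sequence of positive reals tending to infinity and (z_i)_{i≥1} a sequence of nonnegative reals with z_i ≤ y_i for every i; set y_0 := 0 and z_0 := 0. Define d_0 as the trivial metric on {0}, and for each i ≥ 0 define d_{i+1} on [0, y_{i+1}] by: d_{i+1}(x,y) = d_i(x,y) if x,y ∈ [0,y_i]; d_{i+1}(x,y) = d_i(x, z_i) + (y − y_i) if x ∈ [0,y_i] and y ∈ (y_i, y_{i+1}]; d_{i+1}(x,y) = |x − y| if x,y ∈ (y_i, y_{i+1}] (and symmetrically). Then each d_i is a metric on [0, y_i], d_{i+1} restricted to [0,y_i]² coincides with d_i,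 and there exists a unique metric d on [0,∞) which agrees with d_i on [0, y_i] for every i. -/
open Set Filter

/-- `f` is a metric on the set `S`: it vanishes exactly on the diagonal, is
symmetric, and satisfies the triangle inequality on `S`. -/
def IsMetricOn (f : ℝ → ℝ → ℝ) (S : Set ℝ) : Prop :=
  (∀ a ∈ S, ∀ b ∈ S, (f a b = 0 ↔ a = b)) ∧
  (∀ a ∈ S, ∀ b ∈ S, f a b = f b a) ∧
  (∀ a ∈ S, ∀ b ∈ S, ∀ c ∈ S, f a c ≤ f a b + f b c)

/-- The generic stick-breaking construction.  Given cuts `0 = y₀ < y₁ < y₂ < ⋯ → ∞`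
and glue points `0 ≤ zᵢ ≤ yᵢ` (with `y₀ = z₀ = 0`), and the recursively defined
symmetric functions `D i` on `[0, yᵢ]` (with `D 0` trivial on `{0}`, `D (i+1)`
extending `D i`, gluing `(yᵢ, y_{i+1}]` at `zᵢ`): each `D i` is a metric on
`[0, yᵢ]`, `D (i+1)` restricted to `[0,yᵢ]²` coincides with `D i`, and there is a
unique metric `d` on `[0,∞)` agreeing with every `D i` on `[0, yᵢ]`. -/
theorem stick_breaking_metric
    (y z : ℕ → ℝ) (hy0 : y 0 = 0) (hymono : StrictMono y)
    (hypos : ∀ i, 1 ≤ i → 0 < y i)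
    (hytop : Tendsto y atTop atTop)
    (hz0 : z 0 = 0) (hznn : ∀ i, 0 ≤ z i) (hzy : ∀ i, z i ≤ y i)
    (D : ℕ → ℝ → ℝ → ℝ)
    (hD0 : D 0 0 0 = 0)
    (hDsymm : ∀ i a b, D i a b = D i b a)
    (hDold : ∀ i, ∀ a ∈ Icc 0 (y i), ∀ b ∈ Icc 0 (y i), D (i + 1) a b = D i a b)
    (hDglue : ∀ i, ∀ a ∈ Icc 0 (y i), ∀ b ∈ Ioc (y i) (y (i + 1)),
      D (i + 1) a b = D i a (z i) + (b - y i))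
    (hDnew : ∀ i, ∀ a ∈ Ioc (y i) (y (i + 1)), ∀ b ∈ Ioc (y i) (y (i + 1)),
      D (i + 1) a b = |a - b|) :
    (∀ i, IsMetricOn (D i) (Icc 0 (y i))) ∧
    (∀ i, ∀ a ∈ Icc 0 (y i), ∀ b ∈ Icc 0 (y i), D (i + 1) a b = D i a b) ∧
    (∃ d : ℝ → ℝ → ℝ,
      (IsMetricOn d (Ici 0) ∧
        ∀ i, ∀ a ∈ Icc 0 (y i), ∀ b ∈ Icc 0 (y i), d a b = D i a b) ∧
      ∀ d' : ℝ → ℝ → ℝ,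
        (IsMetricOn d' (Ici 0) ∧
          ∀ i, ∀ a ∈ Icc 0 (y i), ∀ b ∈ Icc 0 (y i), d' a b = D i a b) →
        ∀ a ∈ Ici (0:ℝ), ∀ b ∈ Ici (0:ℝ), d' a b = d a b) := by
  classical
  -- each D i is a metric
  have key : ∀ i, IsMetricOn (D i) (Icc 0 (y i)) := by
    intro i
    induction i with
    | zero =>
      rw [hy0]
      refine ⟨?_, fun a _ b _ => hDsymm 0 a b, ?_⟩
      · intro a ha b hb
        simp only [Icc_self, mem_singleton_iff] at ha hb
        subst ha; subst hb; simp [hD0]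
      · intro a ha b hb c hc
        simp only [Icc_self, mem_singleton_iff] at ha hb hc
        subst ha; subst hb; subst hc; simp [hD0]
    | succ i ih =>
      obtain ⟨ihdef, ihsymm, ihtri⟩ := ih
      have ihnn : ∀ a ∈ Icc 0 (y i), ∀ b ∈ Icc 0 (y i), 0 ≤ D i a b := by
        intro a ha b hb
        have h1 := ihtri a ha b hb a ha
        rw [(ihdef a ha a ha).mpr rfl] at h1
        rw [ihsymm b hb a ha] at h1
        linarith
      have hzmem : z i ∈ Icc 0 (y i) := ⟨hznn i, hzy i⟩
      have hsplit : ∀ x ∈ Icc 0 (y (i + 1)),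
          x ∈ Icc 0 (y i) ∨ x ∈ Ioc (y i) (y (i + 1)) := by
        intro x hx
        rcases le_or_gt x (y i) with h | h
        · exact Or.inl ⟨hx.1, h⟩
        · exact Or.inr ⟨h, hx.2⟩
      refine ⟨?_, fun a _ b _ => hDsymm _ a b, ?_⟩
      · intro a ha b hb
        rcases hsplit a ha with hA | hA <;> rcases hsplit b hb with hB | hB
        · rw [hDold i a hA b hB]; exact ihdef a hA b hB
        · rw [hDglue i a hA b hB]
          constructor
          · intro h
            have := ihnn a hA (z i) hzmem
            have := hA.2; have := hB.1
            exfalso; linarith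
          · intro h; subst h; exfalso; exact absurd hA.2 (not_le.mpr hB.1)
        · rw [hDsymm, hDglue i b hB a hA]
          constructor
          · intro h
            have := ihnn b hB (z i) hzmem
            have := hB.2; have := hA.1
            exfalso; linarith
          · intro h; subst h; exfalso; exact absurd hB.2 (not_le.mpr hA.1)
        · rw [hDnew i a hA b hB]
          rw [abs_eq_zero, sub_eq_zero]
      · intro a ha b hb c hc
        rcases hsplit a ha with hA | hA <;> rcases hsplit b hb with hB | hB <;>
          rcases hsplit c hc with hC | hC
        · rw [hDold i a hA b hB, hDold i b hB c hC, hDold i a hA c hC]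
          exact ihtri a hA b hB c hC
        · rw [hDold i a hA b hB, hDglue i b hB c hC, hDglue i a hA c hC]
          have := ihtri a hA b hB (z i) hzmem
          linarith
        · rw [hDglue i a hA b hB, hDsymm (i+1) b c, hDglue i c hC b hB,
            hDold i a hA c hC]
          have h1 := ihtri a hA (z i) hzmem c hC
          rw [ihsymm (z i) hzmem c hC] at h1
          have := hB.1
          linarith
        · rw [hDglue i a hA b hB, hDnew i b hB c hC, hDglue i a hA c hC]
          have := le_abs_self (c - b)
          rw [abs_sub_comm] at this
          linarith
        · rw [hDsymm (i+1) a b, hDglue i b hB a hA, hDold i b hB c hC,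
            hDsymm (i+1) a c, hDglue i c hC a hA]
          have h1 := ihtri c hC b hB (z i) hzmem
          rw [ihsymm c hC b hB] at h1
          linarith
        · rw [hDsymm (i+1) a b, hDglue i b hB a hA, hDglue i b hB c hC,
            hDnew i a hA c hC]
          have habs : |a - c| ≤ (a - y i) + (c - y i) := by
            rw [abs_sub_le_iff]
            constructor <;> linarith [hA.1, hC.1]
          have := ihnn b hB (z i) hzmem
          linarith
        · rw [hDnew i a hA b hB, hDsymm (i+1) b c, hDglue i c hC b hB,
            hDsymm (i+1) a c, hDglue i c hC a hA]
          have := le_abs_self (a - b)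
          linarith
        · rw [hDnew i a hA b hB, hDnew i b hB c hC, hDnew i a hA c hC]
          exact abs_sub_le a b c
  -- consistency across indices
  have hcons : ∀ i j, i ≤ j → ∀ a ∈ Icc 0 (y i), ∀ b ∈ Icc 0 (y i),
      D j a b = D i a b := by
    intro i j hij
    induction j, hij using Nat.le_induction with
    | base => intro a _ b _; rfl
    | succ j hij ihj =>
      intro a ha b hb
      have hsub : Icc 0 (y i) ⊆ Icc 0 (y j) :=
        Icc_subset_Icc le_rfl (hymono.monotone hij)
      rw [hDold j a (hsub ha) b (hsub hb)]
      exact ihj a ha b hb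
  refine ⟨key, hDold, ?_⟩
  set dd : ℝ → ℝ → ℝ := fun a b =>
    if h : ∃ i, a ∈ Icc 0 (y i) ∧ b ∈ Icc 0 (y i) then D (Nat.find h) a b else 0
    with hdd
  have hagree : ∀ i, ∀ a ∈ Icc 0 (y i), ∀ b ∈ Icc 0 (y i), dd a b = D i a b := by
    intro i a ha b hb
    have hex : ∃ j, a ∈ Icc 0 (y j) ∧ b ∈ Icc 0 (y j) := ⟨i, ha, hb⟩
    have hfind := Nat.find_spec hex
    have hle : Nat.find hex ≤ i := Nat.find_le ⟨ha, hb⟩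
    simp only [hdd]
    rw [dif_pos hex]
    exact (hcons _ i hle a hfind.1 b hfind.2).symm
  have hcommon : ∀ a b c : ℝ, 0 ≤ a → 0 ≤ b → 0 ≤ c →
      ∃ i, a ∈ Icc 0 (y i) ∧ b ∈ Icc 0 (y i) ∧ c ∈ Icc 0 (y i) := by
    intro a b c ha hb hc
    obtain ⟨i, hi⟩ := (hytop.eventually_ge_atTop (max a (max b c))).exists
    exact ⟨i, ⟨ha, le_trans (le_max_left _ _) hi⟩,
      ⟨hb, le_trans (le_trans (le_max_left _ _) (le_max_right _ _)) hi⟩,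
      ⟨hc, le_trans (le_trans (le_max_right _ _) (le_max_right _ _)) hi⟩⟩
  refine ⟨dd, ⟨⟨?_, ?_, ?_⟩, hagree⟩, ?_⟩
  · intro a ha b hb
    obtain ⟨i, hai, hbi, -⟩ := hcommon a b b ha hb hb
    rw [hagree i a hai b hbi]
    exact (key i).1 a hai b hbi
  · intro a ha b hb
    obtain ⟨i, hai, hbi, -⟩ := hcommon a b b ha hb hb
    rw [hagree i a hai b hbi, hagree i b hbi a hai]
    exact (key i).2.1 a hai b hbi
  · intro a ha b hb c hc
    obtain ⟨i, hai, hbi, hci⟩ := hcommon a b c ha hb hc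
    rw [hagree i a hai b hbi, hagree i b hbi c hci, hagree i a hai c hci]
    exact (key i).2.2 a hai b hbi c hci
  · rintro d' ⟨-, hd'⟩ a ha b hb
    obtain ⟨i, hai, hbi, -⟩ := hcommon a b b ha hb hb
    rw [hd' i a hai b hbi, hagree i a hai b hbi]
end

section
/- Let (T,d) be a separable ℝ-tree. Then the set of branch points of T, i.e. { x ∈ T : T∖{x} has at least three connected components }, is at most countable. -/
open Set MeasureTheory Filter Metric

lemma left_mem_geoSeg {T : Type*} [MetricSpace T] (x y : T) : x ∈ geoSeg x y := by
  simp [geoSeg]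

lemma right_mem_geoSeg {T : Type*} [MetricSpace T] (x y : T) : y ∈ geoSeg x y := by
  simp [geoSeg]

lemma geoSeg_preconnected {T : Type*} [MetricSpace T] (hT : IsRTree T) (a b : T) :
    IsPreconnected (geoSeg a b) := by
  obtain ⟨γ, h0, hd, hiso, himg⟩ := hT.geodesic a b
  rw [← himg]
  apply IsPreconnected.image isPreconnected_Icc
  intro s hs
  apply ContinuousWithinAt.mono_of_mem_nhdsWithin ?_ self_mem_nhdsWithin
  rw [Metric.continuousWithinAt_iff]
  intro ε hε
  exact ⟨ε, hε, fun t ht hst => by rw [hiso t ht s hs]; rwa [Real.dist_eq] at hst⟩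

lemma geoSeg_triple_subsingleton {T : Type*} [MetricSpace T] (hT : IsRTree T) (a b c : T) :
    (geoSeg a b ∩ geoSeg a c ∩ geoSeg b c).Subsingleton := by
  rintro x ⟨⟨hx1, hx2⟩, hx3⟩ y ⟨⟨hy1, hy2⟩, hy3⟩
  simp only [geoSeg, mem_setOf_eq] at hx1 hx2 hx3 hy1 hy2 hy3
  have hax : dist a x = dist a y := by
    have h1 : dist x b = dist b x := dist_comm x b
    have h2 : dist y b = dist b y := dist_comm y b
    linarith
  obtain ⟨γ, h0, hd, hiso, himg⟩ := hT.geodesic a b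
  have hx : x ∈ γ '' Icc (0:ℝ) (dist a b) := by rw [himg]; exact hx1
  have hy : y ∈ γ '' Icc (0:ℝ) (dist a b) := by rw [himg]; exact hy1
  obtain ⟨s, hs, rfl⟩ := hx
  obtain ⟨t, ht, rfl⟩ := hy
  have h0mem : (0:ℝ) ∈ Icc (0:ℝ) (dist a b) := ⟨le_refl _, dist_nonneg⟩
  have hsd : dist a (γ s) = s := by
    rw [← h0, hiso 0 h0mem s hs, abs_of_nonpos (by linarith [hs.1])]; ring
  have htd : dist a (γ t) = t := by
    rw [← h0, hiso 0 h0mem t ht, abs_of_nonpos (by linarith [ht.1])]; ring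
  have : s = t := by rw [← hsd, ← htd, hax]
  rw [this]

/-- A point close enough to `y` lies in the connected component of `y` in `{x}ᶜ`. -/
lemma mem_comp_of_close {T : Type*} [MetricSpace T] (hT : IsRTree T) {x y a : T}
    (h : dist a y < dist x y) : a ∈ connectedComponentIn ({x}ᶜ) y := by
  have hxseg : x ∉ geoSeg a y := by
    intro hx
    have : dist a x + dist x y = dist a y := hx
    have := dist_nonneg (x := a) (y := x)
    linarith
  have hsub : geoSeg a y ⊆ ({x}ᶜ : Set T) := by
    intro z hz hzx
    exact hxseg (by rwa [mem_singleton_iff.mp hzx] at hz)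
  exact (geoSeg_preconnected hT a y).subset_connectedComponentIn
    (right_mem_geoSeg a y) hsub (left_mem_geoSeg a y)

/-- If `a` and `b` are in different components of `{x}ᶜ`, then `x ∈ geoSeg a b`. -/
lemma mem_geoSeg_of_ne_comp {T : Type*} [MetricSpace T] (hT : IsRTree T) {x a b : T}
    (h : connectedComponentIn ({x}ᶜ) a ≠ connectedComponentIn ({x}ᶜ) b) :
    x ∈ geoSeg a b := by
  by_contra hx
  have hsub : geoSeg a b ⊆ ({x}ᶜ : Set T) := by
    intro z hz hzx
    exact hx (by rwa [mem_singleton_iff.mp hzx] at hz)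
  have : b ∈ connectedComponentIn ({x}ᶜ) a :=
    (geoSeg_preconnected hT a b).subset_connectedComponentIn
      (left_mem_geoSeg a b) hsub (right_mem_geoSeg a b)
  exact h (connectedComponentIn_eq this)

/-- In a separable `ℝ`-tree, the set of branch points (points `x` such that
`T \ {x}` has at least three connected components) is at most countable. -/
theorem branch_points_countable (T : Type*) [MetricSpace T]
    [TopologicalSpace.SeparableSpace T] (hT : IsRTree T) :
    {x : T | ∃ C₁ ∈ comps x, ∃ C₂ ∈ comps x, ∃ C₃ ∈ comps x,
      C₁ ≠ C₂ ∧ C₁ ≠ C₃ ∧ C₂ ≠ C₃}.Countable := by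
  obtain ⟨D, hDc, hDd⟩ := TopologicalSpace.exists_countable_dense T
  have key : {x : T | ∃ C₁ ∈ comps x, ∃ C₂ ∈ comps x, ∃ C₃ ∈ comps x,
      C₁ ≠ C₂ ∧ C₁ ≠ C₃ ∧ C₂ ≠ C₃} ⊆
      ⋃ a ∈ D, ⋃ b ∈ D, ⋃ c ∈ D, (geoSeg a b ∩ geoSeg a c ∩ geoSeg b c) := by
    rintro x ⟨C₁, ⟨y₁, hy₁, rfl⟩, C₂, ⟨y₂, hy₂, rfl⟩, C₃, ⟨y₃, hy₃, rfl⟩, h12, h13, h23⟩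
    obtain ⟨a, haD, ha⟩ := hDd.exists_dist_lt y₁ (dist_pos.mpr (Ne.symm hy₁))
    obtain ⟨b, hbD, hb⟩ := hDd.exists_dist_lt y₂ (dist_pos.mpr (Ne.symm hy₂))
    obtain ⟨c, hcD, hc⟩ := hDd.exists_dist_lt y₃ (dist_pos.mpr (Ne.symm hy₃))
    rw [dist_comm] at ha hb hc
    have hca : connectedComponentIn ({x}ᶜ) a = connectedComponentIn ({x}ᶜ) y₁ :=
      (connectedComponentIn_eq (mem_comp_of_close hT ha)).symm
    have hcb : connectedComponentIn ({x}ᶜ) b = connectedComponentIn ({x}ᶜ) y₂ :=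
      (connectedComponentIn_eq (mem_comp_of_close hT hb)).symm
    have hcc : connectedComponentIn ({x}ᶜ) c = connectedComponentIn ({x}ᶜ) y₃ :=
      (connectedComponentIn_eq (mem_comp_of_close hT hc)).symm
    have hab : x ∈ geoSeg a b := mem_geoSeg_of_ne_comp hT (by rw [hca, hcb]; exact h12)
    have hac : x ∈ geoSeg a c := mem_geoSeg_of_ne_comp hT (by rw [hca, hcc]; exact h13)
    have hbc : x ∈ geoSeg b c := mem_geoSeg_of_ne_comp hT (by rw [hcb, hcc]; exact h23)
    exact mem_iUnion₂.mpr ⟨a, haD, mem_iUnion₂.mpr ⟨b, hbD, mem_iUnion₂.mpr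
      ⟨c, hcD, ⟨⟨hab, hac⟩, hbc⟩⟩⟩⟩
  refine Set.Countable.mono key ?_
  refine hDc.biUnion fun a _ => hDc.biUnion fun b _ => hDc.biUnion fun c _ => ?_
  exact (geoSeg_triple_subsingleton hT a b c).countable
end
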